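/- arXiv:0811.2821 — 3 statements merged into one kernel-verified Lean document; each statement's English description precedes it below -/
import Mathlib

section
/- Let J and J′ be bounded open intervals and let u : ℂ(J) → ℂ be a nonconstant holomorphic map with u(ℂ(J)) ⊆ ℂ(J′) and u(J) ⊆ J′. Then for every θ ∈ (0,π), u(D(J,θ)) ⊆ D(J′,θ). If moreover u maps ℂ(J) ∩ ℂ₊ into ℂ₊ ∪ ℝ and ℂ(J) ∩ ℂ₋ into ℂ₋ ∪ ℝ, then u(D₊(J,θ)) ⊆ D₊(J′,θ) and u(D₋(J,θ)) ⊆ D₋(J′,θ). -/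
/-!
For `J = (a,b)` the map `φ_J(z) = log ((b - z)/(z - a))` is a biholomorphism of `ℂ(J)` onto the
strip `S_π = {|Im w| < π}` carrying `J` onto `ℝ`, and `D(J,θ) = φ_J⁻¹(S_θ)`. In these coordinates
`u` becomes a holomorphic self-map of `S_π` that is real on `ℝ`, and the Schwarz lemma, transported
to the strip by `w ↦ tanh (w/4)` and centred at a real point, shows that such a map does not
increase `|Im w|`. For `D₊` and `D₋` one needs in addition that `u` maps the open upper (lower)
half-plane into itself, which follows from the open mapping theorem.
-/

open Set Complex

noncomputable section

/-- The doubly-slit plane `ℂ(J)` for `J ⊆ ℝ`. -/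
def CSlit (J : Set ℝ) : Set ℂ := {z : ℂ | z.im ≠ 0 ∨ z.re ∈ J}

/-- The upper part `D₊(J,θ)` of the Poincaré neighbourhood of `J = (a,b)`:
the region in the upper half-plane bounded by `J` and the circular arc through
`a` and `b` meeting `ℝ` at angle `θ`. -/
def Dplus (a b θ : ℝ) : Set ℂ :=
  {z : ℂ | 0 < z.im ∧ Real.pi - θ < Complex.arg ((z - (b : ℂ)) / (z - (a : ℂ)))}

/-- `D₋(J,θ)`, the complex conjugate of `D₊(J,θ)`. -/
def Dminus (a b θ : ℝ) : Set ℂ := (fun z : ℂ => starRingEnd ℂ z) '' Dplus a b θ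

/-- The Poincaré neighbourhood `D(J,θ) = D₊(J,θ) ∪ D₋(J,θ) ∪ J`. -/
def Dfull (a b θ : ℝ) : Set ℂ :=
  Dplus a b θ ∪ Dminus a b θ ∪ {z : ℂ | z.im = 0 ∧ z.re ∈ Set.Ioo a b}

/-- The open strip `S_θ = {w : |Im w| < θ}`. -/
def Sstrip (θ : ℝ) : Set ℂ := {w : ℂ | |w.im| < θ}

open scoped Real
open ComplexConjugate

lemma isOpen_CSlit {J : Set ℝ} (hJ : IsOpen J) : IsOpen (CSlit J) :=
  (isOpen_ne_fun continuous_im continuous_const).union (hJ.preimage continuous_re)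

lemma starConvex_CSlit {J : Set ℝ} (hJ : Convex ℝ J) {x : ℝ} (hx : x ∈ J) :
    StarConvex ℝ (x : ℂ) (CSlit J) := by
  intro y hy s t hs ht hst
  have him : (s • (x : ℂ) + t • y).im = t * y.im := by simp
  have hre : (s • (x : ℂ) + t • y).re = s * x + t * y.re := by simp
  change _ ≠ 0 ∨ _ ∈ J
  rw [him, hre]
  rcases hy with hy | hy
  · rcases ht.eq_or_lt with rfl | ht
    · right
      simpa [show s = 1 by linarith] using hx
    · exact .inl (mul_ne_zero ht.ne' hy)
  · exact .inr (hJ hx hy hs ht hst)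

lemma isPreconnected_CSlit {a b : ℝ} (hab : a < b) : IsPreconnected (CSlit (Ioo a b)) := by
  have hm : (a + b) / 2 ∈ Ioo a b := ⟨by linarith, by linarith⟩
  exact ((starConvex_CSlit (convex_Ioo a b) hm).isPathConnected (.inr hm)).isConnected
    |>.isPreconnected

section SlitRatio

variable {a b : ℝ}

def slitRatio (a b : ℝ) (z : ℂ) : ℂ := (b - z) / (z - a)

def slitRatioInv (a b : ℝ) (q : ℂ) : ℂ := (b + a * q) / (1 + q)

lemma im_slitRatio (a b : ℝ) (z : ℂ) :
    (slitRatio a b z).im = (a - b) * z.im / normSq (z - a) := by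
  simp [slitRatio, div_im]
  ring

lemma im_slitRatioInv (a b : ℝ) (q : ℂ) :
    (slitRatioInv a b q).im = (a - b) * q.im / normSq (1 + q) := by
  simp [slitRatioInv, div_im]
  ring

lemma ne_of_mem_CSlit {z : ℂ} (hz : z ∈ CSlit (Ioo a b)) : z ≠ a := by
  rintro rfl
  simp [CSlit] at hz

lemma slitRatio_mem_slitPlane (hab : a < b) {z : ℂ} (hz : z ∈ CSlit (Ioo a b)) :
    slitRatio a b z ∈ slitPlane := by
  rcases eq_or_ne z.im 0 with him | him
  · obtain ⟨ha, hb⟩ : z.re ∈ Ioo a b := hz.resolve_left (not_not.2 him)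
    rw [← re_add_im z, him, slitRatio]
    simp only [ofReal_zero, zero_mul, add_zero, ← ofReal_sub, ← ofReal_div, ofReal_mem_slitPlane]
    exact div_pos (by linarith) (by linarith)
  · refine mem_slitPlane_iff.2 (.inr ?_)
    rw [im_slitRatio]
    exact div_ne_zero (mul_ne_zero (by linarith) him)
      (normSq_pos.2 (sub_ne_zero.2 (ne_of_mem_CSlit hz))).ne'

lemma slitRatioInv_ofReal (hab : a < b) {t : ℝ} (ht : 0 < t) :
    ∃ x ∈ Ioo a b, slitRatioInv a b t = x := by
  refine ⟨(b + a * t) / (1 + t), ⟨?_, ?_⟩, by simp [slitRatioInv]⟩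
  · rw [lt_div_iff₀ (by linarith)]; nlinarith
  · rw [div_lt_iff₀ (by linarith)]; nlinarith

lemma one_add_ne_zero_of_mem_slitPlane {q : ℂ} (hq : q ∈ slitPlane) : 1 + q ≠ 0 := by
  intro h
  rw [show q = -(1 : ℝ) by push_cast; linear_combination h, neg_ofReal_mem_slitPlane] at hq
  exact one_pos.not_gt hq

lemma slitRatioInv_mem_CSlit (hab : a < b) {q : ℂ} (hq : q ∈ slitPlane) :
    slitRatioInv a b q ∈ CSlit (Ioo a b) := by
  rcases eq_or_ne q.im 0 with him | him
  · have hre : 0 < q.re := (mem_slitPlane_iff.1 hq).resolve_right (not_not.2 him)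
    obtain ⟨x, hx, hqx⟩ := slitRatioInv_ofReal hab hre
    rw [← re_add_im q, him, ofReal_zero, zero_mul, add_zero, hqx]
    exact .inr (by simpa using hx)
  · refine .inl ?_
    rw [im_slitRatioInv]
    exact div_ne_zero (mul_ne_zero (by linarith) him)
      (normSq_pos.2 (one_add_ne_zero_of_mem_slitPlane hq)).ne'

lemma slitRatioInv_slitRatio (hab : a < b) {z : ℂ} (hz : z ≠ a) :
    slitRatioInv a b (slitRatio a b z) = z := by
  have hza : z - a ≠ 0 := sub_ne_zero.2 hz
  have hba : (b : ℂ) - a ≠ 0 := sub_ne_zero.2 (by exact_mod_cast hab.ne')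
  have hden : 1 + (b - z) / (z - a) = (b - a) / (z - a) := by field_simp; ring
  rw [slitRatioInv, slitRatio, hden]
  field_simp
  ring

lemma slitRatio_conj (a b : ℝ) (z : ℂ) :
    slitRatio a b (conj z) = conj (slitRatio a b z) := by
  simp [slitRatio]

end SlitRatio

section StripCoord

variable {a b : ℝ}

def stripCoord (a b : ℝ) (z : ℂ) : ℂ := log (slitRatio a b z)

def stripCoordInv (a b : ℝ) (w : ℂ) : ℂ := slitRatioInv a b (exp w)

lemma mem_Sstrip_pi_iff {w : ℂ} : w ∈ Sstrip π ↔ w.im ∈ Ioo (-π) π := by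
  simp only [Sstrip, mem_ofPred_eq, mem_Ioo, abs_lt]

lemma stripCoord_mem_Sstrip (hab : a < b) {z : ℂ} (hz : z ∈ CSlit (Ioo a b)) :
    stripCoord a b z ∈ Sstrip π :=
  mem_Sstrip_pi_iff.2 (expOpenPartialHomeomorph.map_target (slitRatio_mem_slitPlane hab hz))

lemma im_stripCoord_eq_zero {z : ℂ} (him : z.im = 0) (hre : z.re ∈ Ioo a b) :
    (stripCoord a b z).im = 0 := by
  rw [stripCoord, log_im, ← re_add_im z, him, slitRatio]
  simp only [ofReal_zero, zero_mul, add_zero, ← ofReal_sub, ← ofReal_div]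
  exact arg_ofReal_of_nonneg (div_nonneg (by linarith [hre.2]) (by linarith [hre.1]))

lemma im_stripCoord_neg (hab : a < b) {z : ℂ} (hz : 0 < z.im) : (stripCoord a b z).im < 0 := by
  rw [stripCoord, log_im, arg_neg_iff, im_slitRatio]
  refine div_neg_of_neg_of_pos (mul_neg_of_neg_of_pos (by linarith) hz) (normSq_pos.2 ?_)
  exact sub_ne_zero.2 fun h => by simp [h] at hz

lemma stripCoord_conj (hab : a < b) {z : ℂ} (hz : z ∈ CSlit (Ioo a b)) :
    stripCoord a b (conj z) = conj (stripCoord a b z) := by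
  rw [stripCoord, stripCoord, slitRatio_conj,
    log_conj _ (mem_slitPlane_iff_arg.1 (slitRatio_mem_slitPlane hab hz)).1]

lemma differentiableAt_stripCoord (hab : a < b) {z : ℂ} (hz : z ∈ CSlit (Ioo a b)) :
    DifferentiableAt ℂ (stripCoord a b) z := by
  have hza : z - a ≠ 0 := sub_ne_zero.2 (ne_of_mem_CSlit hz)
  have := differentiableAt_log (slitRatio_mem_slitPlane hab hz)
  unfold stripCoord slitRatio at *
  fun_prop (disch := assumption)

lemma exp_mem_slitPlane_of_mem_Sstrip {w : ℂ} (hw : w ∈ Sstrip π) : exp w ∈ slitPlane :=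
  expOpenPartialHomeomorph.map_source (mem_Sstrip_pi_iff.1 hw)

lemma stripCoordInv_mem_CSlit (hab : a < b) {w : ℂ} (hw : w ∈ Sstrip π) :
    stripCoordInv a b w ∈ CSlit (Ioo a b) :=
  slitRatioInv_mem_CSlit hab (exp_mem_slitPlane_of_mem_Sstrip hw)

lemma stripCoordInv_ofReal (hab : a < b) (t : ℝ) : ∃ x ∈ Ioo a b, stripCoordInv a b t = x := by
  rw [stripCoordInv, ← ofReal_exp]
  exact slitRatioInv_ofReal hab (Real.exp_pos t)

lemma differentiableAt_stripCoordInv {w : ℂ} (hw : w ∈ Sstrip π) :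
    DifferentiableAt ℂ (stripCoordInv a b) w := by
  have := one_add_ne_zero_of_mem_slitPlane (exp_mem_slitPlane_of_mem_Sstrip hw)
  unfold stripCoordInv slitRatioInv
  fun_prop (disch := assumption)

lemma stripCoordInv_stripCoord (hab : a < b) {z : ℂ} (hz : z ∈ CSlit (Ioo a b)) :
    stripCoordInv a b (stripCoord a b z) = z := by
  rw [stripCoordInv, stripCoord, exp_log (slitPlane_ne_zero (slitRatio_mem_slitPlane hab hz)),
    slitRatioInv_slitRatio hab (ne_of_mem_CSlit hz)]

end StripCoord

lemma normSq_sinh (v : ℂ) : normSq (sinh v) = Real.sinh v.re ^ 2 + Real.sin v.im ^ 2 := by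
  have h : sinh v =
      (Real.sinh v.re * Real.cos v.im : ℝ) + (Real.cosh v.re * Real.sin v.im : ℝ) * I := by
    conv_lhs => rw [← re_add_im v]
    rw [sinh_add, sinh_mul_I, cosh_mul_I]
    push_cast
    ring
  rw [h, normSq_add_mul_I]
  nlinarith [Real.sin_sq_add_cos_sq v.im, Real.cosh_sq v.re]

lemma normSq_cosh (v : ℂ) : normSq (cosh v) = Real.sinh v.re ^ 2 + Real.cos v.im ^ 2 := by
  have h : cosh v =
      (Real.cosh v.re * Real.cos v.im : ℝ) + (Real.sinh v.re * Real.sin v.im : ℝ) * I := by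
    conv_lhs => rw [← re_add_im v]
    rw [cosh_add, sinh_mul_I, cosh_mul_I]
    push_cast
    ring
  rw [h, normSq_add_mul_I]
  nlinarith [Real.sin_sq_add_cos_sq v.im, Real.cosh_sq v.re]

lemma cos_pos_of_abs_lt {y : ℝ} (hy : |y| < π / 2) : 0 < Real.cos y :=
  Real.cos_pos_of_mem_Ioo (abs_lt.1 hy)

lemma cosh_ne_zero_of_abs_im_lt {v : ℂ} (hv : |v.im| < π / 2) : cosh v ≠ 0 := by
  rw [← normSq_pos, normSq_cosh]
  nlinarith [cos_pos_of_abs_lt hv]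

lemma norm_tanh_sq (v : ℂ) :
    ‖tanh v‖ ^ 2 =
      (Real.sinh v.re ^ 2 + Real.sin v.im ^ 2) / (Real.sinh v.re ^ 2 + Real.cos v.im ^ 2) := by
  rw [tanh_eq_sinh_div_cosh, norm_div, div_pow, Complex.sq_norm, Complex.sq_norm, normSq_sinh,
    normSq_cosh]

lemma sin_sq_lt_cos_sq {y : ℝ} (hy : |y| < π / 4) : Real.sin y ^ 2 < Real.cos y ^ 2 := by
  have : 0 < Real.cos (2 * y) := cos_pos_of_abs_lt (by rw [abs_mul, abs_two]; linarith)
  nlinarith [Real.cos_two_mul' y]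

lemma norm_tanh_lt_one {v : ℂ} (hv : |v.im| < π / 4) : ‖tanh v‖ < 1 := by
  have hlt := sin_sq_lt_cos_sq hv
  have hden : 0 < Real.sinh v.re ^ 2 + Real.cos v.im ^ 2 := by
    nlinarith [sq_nonneg (Real.sin v.im)]
  have : ‖tanh v‖ ^ 2 < 1 := by
    rw [norm_tanh_sq, div_lt_one hden]
    linarith
  nlinarith [norm_nonneg (tanh v)]

lemma Real.tan_abs_eq_abs_tan {y : ℝ} (hy : |y| < π / 2) : Real.tan |y| = |Real.tan y| := by
  rcases abs_cases y with ⟨h, hy0⟩ | ⟨h, hy0⟩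
  · rw [h, abs_of_nonneg (Real.tan_nonneg_of_nonneg_of_le_pi_div_two hy0 (by linarith))]
  · rw [h, ← abs_neg, ← Real.tan_neg,
      abs_of_nonneg (Real.tan_nonneg_of_nonneg_of_le_pi_div_two (by linarith) (by linarith))]

/-- On horizontal lines `‖tanh‖` is smallest on the imaginary axis, where it equals `tan |Im v|`. -/
lemma tan_abs_im_le_norm_tanh {v : ℂ} (hv : |v.im| < π / 4) : Real.tan |v.im| ≤ ‖tanh v‖ := by
  have hv' : |v.im| < π / 2 := by linarith [Real.pi_pos]
  have hcos : 0 < Real.cos v.im := cos_pos_of_abs_lt hv'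
  have hlt := sin_sq_lt_cos_sq hv
  have htan_sq : Real.tan |v.im| ^ 2 = Real.sin v.im ^ 2 / Real.cos v.im ^ 2 := by
    rw [Real.tan_abs_eq_abs_tan hv', sq_abs, Real.tan_eq_sin_div_cos, div_pow]
  have htan : 0 ≤ Real.tan |v.im| := by
    rw [Real.tan_abs_eq_abs_tan hv']; exact abs_nonneg _
  refine (sq_le_sq₀ htan (norm_nonneg _)).1 ?_
  rw [htan_sq, norm_tanh_sq, div_le_div_iff₀ (by positivity) (by positivity)]
  nlinarith [sq_nonneg (Real.sinh v.re)]

lemma norm_tanh_ofReal_mul_I {t : ℝ} (ht : |t| < π / 2) : ‖tanh (t * I)‖ = Real.tan |t| := by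
  rw [tanh_mul_I, norm_mul, norm_I, mul_one, ← ofReal_tan, norm_real, Real.norm_eq_abs,
    Real.tan_abs_eq_abs_tan ht]

lemma one_add_tanh_div_one_sub_tanh {v : ℂ} (hv : cosh v ≠ 0) :
    (1 + tanh v) / (1 - tanh v) = exp (2 * v) := by
  have hplus : 1 + sinh v / cosh v = exp v / cosh v := by rw [← cosh_add_sinh]; field_simp
  have hminus : 1 - sinh v / cosh v = exp (-v) / cosh v := by rw [← cosh_sub_sinh]; field_simp
  rw [tanh_eq_sinh_div_cosh, hplus, hminus, div_div_div_cancel_right₀ hv, ← exp_sub]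
  ring_nf

lemma isOpen_Sstrip (θ : ℝ) : IsOpen (Sstrip θ) :=
  isOpen_lt continuous_im.abs continuous_const

@[simp]
lemma add_ofReal_mem_Sstrip {θ : ℝ} (v : ℂ) (r : ℝ) : v + r ∈ Sstrip θ ↔ v ∈ Sstrip θ := by
  simp [Sstrip]

@[simp]
lemma sub_ofReal_mem_Sstrip {θ : ℝ} (v : ℂ) (r : ℝ) : v - r ∈ Sstrip θ ↔ v ∈ Sstrip θ := by
  simp [Sstrip]

def stripToDisk (w : ℂ) : ℂ := tanh (w / 4)

def diskToStrip (ζ : ℂ) : ℂ := 2 * log ((1 + ζ) / (1 - ζ))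

lemma abs_im_div_four_lt {w : ℂ} (hw : w ∈ Sstrip π) : |(w / 4).im| < π / 4 := by
  rw [div_ofNat_im, abs_div, Nat.abs_ofNat]
  exact div_lt_div_of_pos_right hw four_pos

lemma cosh_div_four_ne_zero {w : ℂ} (hw : w ∈ Sstrip π) : cosh (w / 4) ≠ 0 :=
  cosh_ne_zero_of_abs_im_lt ((abs_im_div_four_lt hw).trans (by linarith [Real.pi_pos]))

lemma norm_stripToDisk_lt_one {w : ℂ} (hw : w ∈ Sstrip π) : ‖stripToDisk w‖ < 1 :=
  norm_tanh_lt_one (abs_im_div_four_lt hw)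

lemma tan_le_norm_stripToDisk {w : ℂ} (hw : w ∈ Sstrip π) :
    Real.tan (|w.im| / 4) ≤ ‖stripToDisk w‖ := by
  simpa [stripToDisk, abs_div] using tan_abs_im_le_norm_tanh (abs_im_div_four_lt hw)

lemma norm_stripToDisk_ofReal_mul_I {t : ℝ} (ht : |t| < π) :
    ‖stripToDisk (t * I)‖ = Real.tan (|t| / 4) := by
  have : |t / 4| < π / 2 := by rw [abs_div, Nat.abs_ofNat]; linarith [Real.pi_pos]
  rw [stripToDisk, show (t : ℂ) * I / 4 = ((t / 4 : ℝ) : ℂ) * I by push_cast; ring,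
    norm_tanh_ofReal_mul_I this, abs_div, Nat.abs_ofNat]

lemma differentiableAt_stripToDisk {w : ℂ} (hw : w ∈ Sstrip π) :
    DifferentiableAt ℂ stripToDisk w := by
  have := cosh_div_four_ne_zero hw
  change DifferentiableAt ℂ (fun w => tanh (w / 4)) w
  simp only [tanh_eq_sinh_div_cosh]
  fun_prop (disch := assumption)

lemma re_one_add_div_one_sub_pos {ζ : ℂ} (hζ : ‖ζ‖ < 1) : 0 < ((1 + ζ) / (1 - ζ)).re := by
  have hne : 1 - ζ ≠ 0 := sub_ne_zero.2 fun h => by simp [← h] at hζ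
  have hnum : (1 + ζ).re * (1 - ζ).re + (1 + ζ).im * (1 - ζ).im = 1 - normSq ζ := by
    simp [normSq_apply]; ring
  rw [div_re, ← add_div, hnum]
  refine div_pos ?_ (normSq_pos.2 hne)
  rw [← Complex.sq_norm]
  nlinarith [norm_nonneg ζ]

lemma diskToStrip_mem_Sstrip {ζ : ℂ} (hζ : ‖ζ‖ < 1) : diskToStrip ζ ∈ Sstrip π := by
  have harg := abs_arg_lt_pi_div_two_iff.2 (.inl (re_one_add_div_one_sub_pos hζ))
  have him : (diskToStrip ζ).im = 2 * arg ((1 + ζ) / (1 - ζ)) := by simp [diskToStrip, log_im]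
  change |_| < π
  rw [him, abs_mul, abs_two]
  linarith

lemma differentiableAt_diskToStrip {ζ : ℂ} (hζ : ‖ζ‖ < 1) :
    DifferentiableAt ℂ diskToStrip ζ := by
  have hne : 1 - ζ ≠ 0 := sub_ne_zero.2 fun h => by simp [← h] at hζ
  have := differentiableAt_log (.inl (re_one_add_div_one_sub_pos hζ))
  unfold diskToStrip
  fun_prop (disch := assumption)

lemma diskToStrip_stripToDisk {w : ℂ} (hw : w ∈ Sstrip π) : diskToStrip (stripToDisk w) = w := by
  obtain ⟨hlo, hhi⟩ := mem_Sstrip_pi_iff.1 hw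
  rw [diskToStrip, stripToDisk, one_add_tanh_div_one_sub_tanh (cosh_div_four_ne_zero hw), log_exp]
  · ring
  · simp only [mul_im, div_ofNat_im, div_ofNat_re]; norm_num; linarith
  · simp only [mul_im, div_ofNat_im, div_ofNat_re]; norm_num; linarith

section StripSelfMap

variable {f : ℂ → ℂ}

lemma mapsTo_ball_stripToDisk_comp (hf : MapsTo f (Sstrip π) (Sstrip π)) (x c : ℝ) :
    MapsTo (fun ζ => stripToDisk (f (diskToStrip ζ + x) - c))
      (Metric.ball 0 1) (Metric.closedBall 0 1) := fun ζ hζ => by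
  have hm : diskToStrip ζ + x ∈ Sstrip π := by
    simpa using diskToStrip_mem_Sstrip (mem_ball_zero_iff.1 hζ)
  exact mem_closedBall_zero_iff.2 (norm_stripToDisk_lt_one (by simpa using hf hm)).le

lemma differentiableOn_stripToDisk_comp (hd : DifferentiableOn ℂ f (Sstrip π))
    (hf : MapsTo f (Sstrip π) (Sstrip π)) (x c : ℝ) :
    DifferentiableOn ℂ (fun ζ => stripToDisk (f (diskToStrip ζ + x) - c)) (Metric.ball 0 1) := by
  intro ζ hζ
  rw [mem_ball_zero_iff] at hζ
  have hm : diskToStrip ζ + x ∈ Sstrip π := by simpa using diskToStrip_mem_Sstrip hζ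
  have hfd : DifferentiableAt ℂ f (diskToStrip ζ + x) :=
    hd.differentiableAt ((isOpen_Sstrip π).mem_nhds hm)
  refine DifferentiableAt.differentiableWithinAt ?_
  exact (differentiableAt_stripToDisk (by simpa using hf hm)).comp (g := stripToDisk) ζ
    ((hfd.comp ζ ((differentiableAt_diskToStrip hζ).add_const _)).sub_const _)

theorem abs_im_le_of_mapsTo_Sstrip (hd : DifferentiableOn ℂ f (Sstrip π))
    (hf : MapsTo f (Sstrip π) (Sstrip π)) {w : ℂ} (hw : w ∈ Sstrip π) (hreal : (f w.re).im = 0) :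
    |(f w).im| ≤ |w.im| := by
  set c := (f w.re).re
  have hc : f w.re = c := Complex.ext rfl (by simpa using hreal)
  -- `F` is `f` read in the disk chart centred at `Re w`, so it fixes `0`.
  set F := fun ζ => stripToDisk (f (diskToStrip ζ + w.re) - c)
  have hwI : (w.im : ℂ) * I ∈ Sstrip π := by simpa [Sstrip] using hw
  have hFw : F (stripToDisk (w.im * I)) = stripToDisk (f w - c) := by
    simp only [F, diskToStrip_stripToDisk hwI, add_comm _ (w.re : ℂ), re_add_im]
  have hschwarz : ‖F (stripToDisk (w.im * I))‖ ≤ ‖stripToDisk (w.im * I)‖ :=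
    norm_le_norm_of_mapsTo_ball (differentiableOn_stripToDisk_comp hd hf _ _)
      (mapsTo_ball_stripToDisk_comp hf _ _) (by simp [F, diskToStrip, stripToDisk, hc])
      (norm_stripToDisk_lt_one hwI)
  have htan : Real.tan (|(f w).im| / 4) ≤ Real.tan (|w.im| / 4) :=
    calc Real.tan (|(f w).im| / 4)
        = Real.tan (|(f w - c).im| / 4) := by rw [sub_im, ofReal_im, sub_zero]
      _ ≤ ‖stripToDisk (f w - c)‖ := tan_le_norm_stripToDisk (by simpa using hf hw)
      _ = ‖F (stripToDisk (w.im * I))‖ := by rw [hFw]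
      _ ≤ ‖stripToDisk (w.im * I)‖ := hschwarz
      _ = Real.tan (|w.im| / 4) := norm_stripToDisk_ofReal_mul_I hw
  have hmem : ∀ v ∈ Sstrip π, |v.im| / 4 ∈ Ioo (-(π / 2)) (π / 2) := fun v hv =>
    ⟨by linarith [abs_nonneg v.im, Real.pi_pos], by linarith [show |v.im| < π from hv, Real.pi_pos]⟩
  have := (Real.strictMonoOn_tan.le_iff_le (hmem _ (hf hw)) (hmem _ hw)).1 htan
  linarith

end StripSelfMap

section PoincareNeighbourhood

variable {a b θ : ℝ}

lemma mem_Dplus_iff (hab : a < b) {z : ℂ} :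
    z ∈ Dplus a b θ ↔ 0 < z.im ∧ |(stripCoord a b z).im| < θ := by
  refine and_congr_right fun hz => ?_
  have hneg := im_stripCoord_neg hab hz
  rw [stripCoord, log_im] at hneg ⊢
  rw [show (z - b) / (z - a) = -slitRatio a b z by rw [slitRatio, ← neg_div, neg_sub],
    arg_neg_eq_arg_add_pi_of_im_neg (arg_neg_iff.1 hneg), abs_of_neg hneg]
  constructor <;> intro h <;> linarith

lemma mem_Dminus_iff (hab : a < b) {z : ℂ} :
    z ∈ Dminus a b θ ↔ z.im < 0 ∧ |(stripCoord a b z).im| < θ := by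
  have hinv : Function.Involutive (starRingEnd ℂ) := star_involutive
  rw [Dminus, image_eq_preimage_of_inverse hinv.leftInverse hinv.rightInverse, mem_preimage,
    mem_Dplus_iff hab, conj_im, neg_pos]
  refine and_congr_right fun hz => ?_
  rw [stripCoord_conj hab (.inl hz.ne), conj_im, abs_neg]

lemma mem_Dfull_iff (hab : a < b) (hθ : 0 < θ) {z : ℂ} :
    z ∈ Dfull a b θ ↔ z ∈ CSlit (Ioo a b) ∧ |(stripCoord a b z).im| < θ := by
  rw [Dfull, mem_union, mem_union, mem_Dplus_iff hab, mem_Dminus_iff hab]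
  rcases lt_trichotomy z.im 0 with h | h | h
  · simp [h, h.ne, h.not_gt, CSlit]
  · have hCS : z ∈ CSlit (Ioo a b) ↔ z.re ∈ Ioo a b := by simp [CSlit, h]
    simp only [hCS, h, lt_irrefl, false_and, false_or, mem_ofPred_eq, true_and]
    exact ⟨fun hre => ⟨hre, by rwa [im_stripCoord_eq_zero h hre, abs_zero]⟩, And.left⟩
  · simp [h, h.ne', h.not_gt, CSlit]

end PoincareNeighbourhood

theorem abs_im_stripCoord_comp_le {a b a' b' : ℝ} (hab : a < b) (hab' : a' < b') {u : ℂ → ℂ}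
    (hholo : DifferentiableOn ℂ u (CSlit (Ioo a b)))
    (hmaps : MapsTo u (CSlit (Ioo a b)) (CSlit (Ioo a' b')))
    (hJ : ∀ x : ℝ, x ∈ Ioo a b → (u x).im = 0 ∧ (u x).re ∈ Ioo a' b')
    {z : ℂ} (hz : z ∈ CSlit (Ioo a b)) :
    |(stripCoord a' b' (u z)).im| ≤ |(stripCoord a b z).im| := by
  set f := fun w => stripCoord a' b' (u (stripCoordInv a b w))
  have hψ : ∀ w ∈ Sstrip π, stripCoordInv a b w ∈ CSlit (Ioo a b) :=
    fun w hw => stripCoordInv_mem_CSlit hab hw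
  have hd : DifferentiableOn ℂ f (Sstrip π) := fun w hw =>
    ((differentiableAt_stripCoord hab' (hmaps (hψ w hw))).comp (g := stripCoord a' b') w
      ((hholo.differentiableAt ((isOpen_CSlit isOpen_Ioo).mem_nhds (hψ w hw))).comp w
        (differentiableAt_stripCoordInv hw))).differentiableWithinAt
  have hreal : (f (stripCoord a b z).re).im = 0 := by
    obtain ⟨x, hx, hψx⟩ := stripCoordInv_ofReal hab (stripCoord a b z).re
    simp only [f, hψx]
    exact im_stripCoord_eq_zero (hJ x hx).1 (hJ x hx).2
  simpa [f, stripCoordInv_stripCoord hab hz] using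
    abs_im_le_of_mapsTo_Sstrip hd (fun w hw => stripCoord_mem_Sstrip hab' (hmaps (hψ w hw)))
      (stripCoord_mem_Sstrip hab hz) hreal

theorem Set.MapsTo.interior_of_isOpen_image {α β : Type*} [TopologicalSpace β] {f : α → β}
    {s : Set α} {t : Set β} (h : MapsTo f s t) (hs : IsOpen (f '' s)) : MapsTo f s (interior t) :=
  mapsTo_iff_image_subset.2 (interior_maximal h.image_subset hs)

theorem stmt4 (a b a' b' : ℝ) (hab : a < b) (hab' : a' < b')
    (u : ℂ → ℂ)
    (hholo : DifferentiableOn ℂ u (CSlit (Set.Ioo a b)))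
    (hnonconst : ¬ ∃ w : ℂ, ∀ z ∈ CSlit (Set.Ioo a b), u z = w)
    (hmaps : Set.MapsTo u (CSlit (Set.Ioo a b)) (CSlit (Set.Ioo a' b')))
    (hJ : ∀ x : ℝ, x ∈ Set.Ioo a b →
      (u x).im = 0 ∧ (u x).re ∈ Set.Ioo a' b') :
    (∀ θ ∈ Set.Ioo (0 : ℝ) Real.pi, u '' Dfull a b θ ⊆ Dfull a' b' θ) ∧
    ((∀ z ∈ CSlit (Set.Ioo a b), 0 < z.im → 0 ≤ (u z).im) →
      (∀ z ∈ CSlit (Set.Ioo a b), z.im < 0 → (u z).im ≤ 0) →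
      ∀ θ ∈ Set.Ioo (0 : ℝ) Real.pi,
        u '' Dplus a b θ ⊆ Dplus a' b' θ ∧ u '' Dminus a b θ ⊆ Dminus a' b' θ) := by
  have hcontract := fun z (hz : z ∈ CSlit (Ioo a b)) =>
    abs_im_stripCoord_comp_le hab hab' hholo hmaps hJ hz
  have hopen : ∀ s ⊆ CSlit (Ioo a b), IsOpen s → IsOpen (u '' s) :=
    ((hholo.analyticOnNhd (isOpen_CSlit isOpen_Ioo)).is_constant_or_isOpen
      (isPreconnected_CSlit hab)).resolve_left hnonconst
  refine ⟨fun θ hθ => ?_, fun hup hdown θ _ => ⟨?_, ?_⟩⟩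
  · rintro _ ⟨z, hz, rfl⟩
    rw [mem_Dfull_iff hab hθ.1] at hz
    exact (mem_Dfull_iff hab' hθ.1).2 ⟨hmaps hz.1, (hcontract z hz.1).trans_lt hz.2⟩
  · have hupper : MapsTo u {z | 0 < z.im} (interior {w | 0 ≤ w.im}) :=
      MapsTo.interior_of_isOpen_image (fun z hz => hup z (.inl hz.ne') hz)
        (hopen _ (fun z hz => .inl hz.ne') (isOpen_lt continuous_const continuous_im))
    rw [interior_setOfPred_le_im] at hupper
    rintro _ ⟨z, hz, rfl⟩
    rw [mem_Dplus_iff hab] at hz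
    exact (mem_Dplus_iff hab').2 ⟨hupper hz.1, (hcontract z (.inl hz.1.ne')).trans_lt hz.2⟩
  · have hlower : MapsTo u {z | z.im < 0} (interior {w | w.im ≤ 0}) :=
      MapsTo.interior_of_isOpen_image (fun z hz => hdown z (.inl hz.ne) hz)
        (hopen _ (fun z hz => .inl hz.ne) (isOpen_lt continuous_im continuous_const))
    rw [interior_setOfPred_im_le] at hlower
    rintro _ ⟨z, hz, rfl⟩
    rw [mem_Dminus_iff hab] at hz
    exact (mem_Dminus_iff hab').2 ⟨hlower hz.1, (hcontract z (.inl hz.1.ne)).trans_lt hz.2⟩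
end
end

section
/- Let f ∈ A₁(c), set t = f′(c₁) and s = f′(c₂), and assume s > t > 0. Let X = 2s·(√(s/t) − 1)/(c₂−c₁), which is the unique positive solution of 4s³/((2s + X(c₂−c₁))²) = t. Then for every x ∈ (c₂, 1) with 2s + X(c₂−x) > 0: f(x) ≥ c₄ + (4s³/X)·( 1/(2s + X(c₂−x)) − 1/(2s) ). -/
open Set Complex

noncomputable section

/-- `ℂ₁ = ℂ((−1,1))`. -/
def C1 : Set ℂ := CSlit (Set.Ioo (-1 : ℝ) 1)

/-- The class `A₁(c)` of normalized Herglotz functions. -/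
structure MemA1 (c₁ c₂ c₃ c₄ : ℝ) (f : ℂ → ℂ) : Prop where
  holo : DifferentiableOn ℂ f C1
  maps : Set.MapsTo f C1 C1
  symm : ∀ z ∈ C1, f (starRingEnd ℂ z) = starRingEnd ℂ (f z)
  upper : ∀ z ∈ C1, 0 < z.im → 0 ≤ (f z).im
  lower : ∀ z ∈ C1, z.im < 0 → (f z).im ≤ 0
  val1 : f (c₁ : ℂ) = (c₃ : ℂ)
  val2 : f (c₂ : ℂ) = (c₄ : ℂ)

/-!
Since `f′(c₁) > 0`, `f` is a non-constant Pick function: it maps `ℂ₊` into `ℂ₊` and is strictly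
increasing on `(-1, 1)`. The Schwarz–Pick lemma for `ℂ₊`, pushed to the boundary point `c₂`, gives
Julia's inequality `Im z · |f z - c₄|² ≤ s · |z - c₂|² · Im f z`. It says that
`h z = 1 / (z - c₂) - s / (f z - c₄)` is again a Pick function, so `h` increases on `(-1, 1)`;
pushed to `c₁` instead, it gives `(c₄ - c₃)² ≤ t s (c₂ - c₁)²`, a lower bound for `h c₁`.
The estimate at `x` is `h c₁ ≤ h x` solved for `f x`; the claims about `X` are algebra.
-/

open Metric Filter Topology ComplexConjugate

lemma normSq_sub_conj (a b : ℂ) : normSq (a - conj b) = normSq (a - b) + 4 * a.im * b.im := by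
  simp only [normSq_apply, sub_re, sub_im, conj_re, conj_im]
  ring

lemma sub_conj_ne_zero {a b : ℂ} (ha : 0 < a.im) (hb : 0 < b.im) : a - conj b ≠ 0 := by
  intro h
  have := congrArg im h
  simp only [sub_im, conj_im, zero_im] at this
  linarith

def cayley (w z : ℂ) : ℂ := (z - w) / (z - conj w)

def cayleyInv (w u : ℂ) : ℂ := (u * conj w - w) / (u - 1)

lemma norm_cayley_lt_one {w z : ℂ} (hw : 0 < w.im) (hz : 0 < z.im) : ‖cayley w z‖ < 1 := by
  have hne := sub_conj_ne_zero hz hw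
  rw [cayley, norm_div, div_lt_one (norm_pos_iff.2 hne), ← sq_lt_sq₀ (norm_nonneg _)
    (norm_nonneg _), ← normSq_eq_norm_sq, ← normSq_eq_norm_sq, normSq_sub_conj]
  nlinarith

lemma im_cayleyInv_pos {w u : ℂ} (hw : 0 < w.im) (hu : ‖u‖ < 1) : 0 < (cayleyInv w u).im := by
  have hu1 : u - 1 ≠ 0 := fun h => by simp [sub_eq_zero.1 h] at hu
  have hnormSq : normSq u < 1 := by rw [normSq_eq_norm_sq]; nlinarith [norm_nonneg u]
  have him : (cayleyInv w u).im = w.im * (1 - normSq u) / normSq (u - 1) := by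
    simp only [cayleyInv, div_im, normSq_apply, mul_re, mul_im, conj_re, conj_im, sub_re,
      sub_im, one_re, one_im]
    ring
  rw [him]
  have := normSq_pos.2 hu1
  have : 0 < 1 - normSq u := by linarith
  positivity

lemma cayleyInv_cayley {w z : ℂ} (hw : 0 < w.im) (hz : 0 < z.im) :
    cayleyInv w (cayley w z) = z := by
  have hzw := sub_conj_ne_zero hz hw
  have hww : conj w - w ≠ 0 := fun h => by
    have := congrArg im h
    simp only [sub_im, conj_im, zero_im] at this
    linarith
  have hu1 : (z - w) / (z - conj w) - 1 ≠ 0 := by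
    rw [div_sub_one hzw]
    exact div_ne_zero (by rwa [sub_sub_sub_cancel_left]) hzw
  rw [cayleyInv, cayley, div_eq_iff hu1]
  field_simp
  ring

theorem schwarzPick_upperHalfPlane {f : ℂ → ℂ} (hd : DifferentiableOn ℂ f {z | 0 < z.im})
    (hf : ∀ z : ℂ, 0 < z.im → 0 < (f z).im) {z w : ℂ} (hz : 0 < z.im) (hw : 0 < w.im) :
    z.im * w.im * normSq (f z - f w) ≤ normSq (z - w) * ((f z).im * (f w).im) := by
  have hfw := hf w hw
  have hfz := hf z hz
  have hmaps : MapsTo (cayleyInv w) (ball 0 1) {z | 0 < z.im} := fun u hu =>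
    im_cayleyInv_pos hw (mem_ball_zero_iff.1 hu)
  have hdiff : DifferentiableOn ℂ (cayley (f w) ∘ f ∘ cayleyInv w) (ball 0 1) := by
    have hinv : DifferentiableOn ℂ (cayleyInv w) (ball 0 1) :=
      DifferentiableOn.div (by fun_prop) (by fun_prop) fun u hu h => by
        simp [sub_eq_zero.1 h] at hu
    have hcay : DifferentiableOn ℂ (cayley (f w)) {v | 0 < v.im} :=
      DifferentiableOn.div (by fun_prop) (by fun_prop) fun v hv => sub_conj_ne_zero hv hfw
    exact hcay.comp (hd.comp hinv hmaps) fun u hu => hf _ (hmaps hu)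
  have hschwarz : ‖cayley (f w) (f z)‖ ≤ ‖cayley w z‖ := by
    have := Complex.norm_le_norm_of_mapsTo_ball hdiff
      (fun u hu => ball_subset_closedBall (mem_ball_zero_iff.2
        (norm_cayley_lt_one hfw (hf _ (hmaps hu)))))
      (by simp [cayleyInv, cayley]) (norm_cayley_lt_one hw hz)
    rwa [Function.comp_apply, Function.comp_apply, cayleyInv_cayley hw hz] at this
  have hsq : normSq (cayley (f w) (f z)) ≤ normSq (cayley w z) := by
    rw [normSq_eq_norm_sq, normSq_eq_norm_sq]
    gcongr
  rw [cayley, cayley, normSq_div, normSq_div, normSq_sub_conj, normSq_sub_conj,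
    div_le_div_iff₀ (by nlinarith [normSq_nonneg (f z - f w)])
      (by nlinarith [normSq_nonneg (z - w)])] at hsq
  nlinarith

lemma tendsto_ofReal_add_mul_I (y : ℝ) :
    Tendsto (fun ε : ℝ => (y : ℂ) + ε * I) (𝓝[>] 0) (𝓝[≠] (y : ℂ)) := by
  refine tendsto_nhdsWithin_of_tendsto_nhds_of_eventually_within _ ?_ ?_
  · have : Tendsto (fun ε : ℝ => (y : ℂ) + ε * I) (𝓝 0) (𝓝 ((y : ℂ) + (0 : ℝ) * I)) :=
      (by fun_prop : Continuous fun ε : ℝ => (y : ℂ) + ε * I).tendsto 0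
    simpa using this.mono_left nhdsWithin_le_nhds
  · filter_upwards [self_mem_nhdsWithin] with ε (hε : 0 < ε)
    simpa using hε.ne'

lemma tendsto_im_div_of_hasDerivAt {f : ℂ → ℂ} {y : ℝ} {d : ℂ} (hf : HasDerivAt f d y)
    (hy : (f y).im = 0) :
    Tendsto (fun ε : ℝ => (f (y + ε * I)).im / ε) (𝓝[>] 0) (𝓝 d.re) := by
  have hslope := ((continuous_re.tendsto d).comp
    ((hasDerivAt_iff_tendsto_slope.1 hf).comp (tendsto_ofReal_add_mul_I y)))
  refine hslope.congr' ?_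
  filter_upwards [self_mem_nhdsWithin] with ε (hε : 0 < ε)
  simp only [Function.comp_apply, slope_def_field, add_sub_cancel_left, div_re, sub_re, sub_im,
    mul_re, mul_im, ofReal_re, ofReal_im, I_re, I_im, normSq_apply, hy]
  field_simp
  ring

theorem julia_upperHalfPlane {f : ℂ → ℂ} (hd : DifferentiableOn ℂ f {z | 0 < z.im})
    (hf : ∀ z : ℂ, 0 < z.im → 0 < (f z).im) {y : ℝ} {d : ℂ} (hfy : HasDerivAt f d y)
    (hy : (f y).im = 0) {z : ℂ} (hz : 0 < z.im) :
    z.im * normSq (f z - f y) ≤ normSq (z - y) * ((f z).im * d.re) := by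
  have hpath := (tendsto_ofReal_add_mul_I y).mono_right nhdsWithin_le_nhds
  have hfpath : Tendsto (fun ε : ℝ => f (y + ε * I)) (𝓝[>] 0) (𝓝 (f y)) :=
    hfy.continuousAt.tendsto.comp hpath
  have hlhs : Tendsto (fun ε : ℝ => z.im * normSq (f z - f (y + ε * I))) (𝓝[>] 0)
      (𝓝 (z.im * normSq (f z - f y))) :=
    ((continuous_normSq.tendsto _).comp (tendsto_const_nhds.sub hfpath)).const_mul _
  have hrhs : Tendsto (fun ε : ℝ => normSq (z - (y + ε * I)) * ((f z).im *
      ((f (y + ε * I)).im / ε))) (𝓝[>] 0) (𝓝 (normSq (z - y) * ((f z).im * d.re))) :=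
    ((continuous_normSq.tendsto _).comp (tendsto_const_nhds.sub hpath)).mul
      ((tendsto_im_div_of_hasDerivAt hfy hy).const_mul _)
  refine le_of_tendsto_of_tendsto hlhs hrhs ?_
  filter_upwards [self_mem_nhdsWithin] with ε (hε : 0 < ε)
  have hw : 0 < ((y : ℂ) + ε * I).im := by simpa using hε
  have := schwarzPick_upperHalfPlane hd hf hz hw
  simp only [add_im, ofReal_im, mul_im, ofReal_re, I_im, I_re, mul_zero, mul_one, zero_add]
    at this
  simp only [mul_div_assoc', le_div_iff₀ hε]
  linarith

lemma isOpen_C1 : IsOpen C1 :=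
  (isOpen_ne_fun continuous_im continuous_const).union (isOpen_Ioo.preimage continuous_re)

lemma ofReal_mem_C1 {y : ℝ} (hy : y ∈ Ioo (-1 : ℝ) 1) : (y : ℂ) ∈ C1 := Or.inr (by simpa using hy)

lemma mem_C1_of_im_ne_zero {z : ℂ} (hz : z.im ≠ 0) : z ∈ C1 := Or.inl hz

lemma isPreconnected_upper_union_strip :
    IsPreconnected ({z : ℂ | 0 < z.im} ∪ re ⁻¹' Ioo (-1) 1) :=
  (convex_halfSpace_im_gt 0).isPreconnected.union I (by simp) (by simp)
    (((convex_Ioo _ _).linear_preimage reLm).isPreconnected)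

lemma upper_union_strip_subset_C1 : {z : ℂ | 0 < z.im} ∪ re ⁻¹' Ioo (-1) 1 ⊆ C1 := by
  rintro z (hz | hz)
  exacts [mem_C1_of_im_ne_zero (ne_of_gt hz), Or.inr hz]

lemma im_eq_zero_of_continuousAt {g : ℂ → ℂ} {y : ℝ} (hg : ContinuousAt g y)
    (h : ∀ᶠ a : ℝ in 𝓝[≠] y, (g a).im = 0) : (g y).im = 0 := by
  have hlim : Tendsto (fun a : ℝ => (g a).im) (𝓝[≠] y) (𝓝 (g y).im) :=
    ((continuous_im.tendsto _).comp (hg.tendsto.comp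
      (continuous_ofReal.tendsto y))).mono_left nhdsWithin_le_nhds
  exact tendsto_nhds_unique hlim (tendsto_const_nhds.congr' (h.mono fun _ ha => ha.symm))

/-- The extension across `y` of `z ↦ 1 / (z - y) - f' y / (f z - f y)`, which Julia's inequality
makes a Pick function. -/
def juliaQuotient (f : ℂ → ℂ) (y : ℂ) : ℂ → ℂ := dslope (dslope f y) y / dslope f y

lemma juliaQuotient_of_ne {f : ℂ → ℂ} {y z : ℂ} (hzy : z ≠ y) (hfz : f z ≠ f y) :
    juliaQuotient f y z = 1 / (z - y) - deriv f y / (f z - f y) := by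
  have hzy' : z - y ≠ 0 := sub_ne_zero.2 hzy
  have hfz' : f z - f y ≠ 0 := sub_ne_zero.2 hfz
  simp only [juliaQuotient, Pi.div_apply, dslope_of_ne _ hzy, slope_def_field, dslope_same]
  field_simp

structure IsPickOnC1 (f : ℂ → ℂ) : Prop where
  differentiableOn : DifferentiableOn ℂ f C1
  conj_comm : ∀ z ∈ C1, f (conj z) = conj (f z)
  im_nonneg : ∀ z : ℂ, 0 < z.im → 0 ≤ (f z).im

lemma MemA1.isPickOnC1 {c₁ c₂ c₃ c₄ : ℝ} {f : ℂ → ℂ} (hf : MemA1 c₁ c₂ c₃ c₄ f) :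
    IsPickOnC1 f :=
  ⟨hf.holo, hf.symm, fun z hz => hf.upper z (mem_C1_of_im_ne_zero (ne_of_gt hz)) hz⟩

namespace IsPickOnC1

variable {f : ℂ → ℂ} (hf : IsPickOnC1 f)
include hf

lemma im_ofReal {y : ℝ} (hy : y ∈ Ioo (-1 : ℝ) 1) : (f y).im = 0 := by
  have := congrArg im (hf.conj_comm y (ofReal_mem_C1 hy))
  rw [conj_ofReal, conj_im] at this
  linarith

lemma differentiableAt {z : ℂ} (hz : z ∈ C1) : DifferentiableAt ℂ f z :=
  hf.differentiableOn.differentiableAt (isOpen_C1.mem_nhds hz)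

lemma hasDerivAt_ofReal {y : ℝ} (hy : y ∈ Ioo (-1 : ℝ) 1) :
    HasDerivAt f ((deriv (fun a : ℝ => (f a).re) y : ℝ) : ℂ) y := by
  have hd := (hf.differentiableAt (ofReal_mem_C1 hy)).hasDerivAt
  have hre := hd.real_of_complex
  have hreal : deriv f y = ((deriv f y).re : ℂ) := by
    refine (hd.comp_ofReal.congr_of_eventuallyEq ?_).unique hre.ofReal_comp
    filter_upwards [isOpen_Ioo.mem_nhds hy] with a ha
    exact (ext (by simp) (by simp [hf.im_ofReal ha])).symm
  rwa [hre.deriv, ← hreal]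

lemma deriv_re_nonneg {y : ℝ} (hy : y ∈ Ioo (-1 : ℝ) 1) :
    0 ≤ deriv (fun a : ℝ => (f a).re) y := by
  have hlim := tendsto_im_div_of_hasDerivAt (hf.hasDerivAt_ofReal hy) (hf.im_ofReal hy)
  rw [ofReal_re] at hlim
  refine ge_of_tendsto hlim ?_
  filter_upwards [self_mem_nhdsWithin] with ε (hε : 0 < ε)
  exact div_nonneg (hf.im_nonneg _ (by simpa using hε)) hε.le

lemma monotoneOn : MonotoneOn (fun a : ℝ => (f a).re) (Ioo (-1) 1) := by
  have hd : ∀ y ∈ Ioo (-1 : ℝ) 1, HasDerivAt (fun a : ℝ => (f a).re) _ y :=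
    fun y hy => (hf.hasDerivAt_ofReal hy).real_of_complex
  refine monotoneOn_of_deriv_nonneg (convex_Ioo _ _)
    (fun y hy => (hd y hy).continuousAt.continuousWithinAt) ?_ ?_ <;> rw [interior_Ioo]
  · exact fun y hy => (hd y hy).differentiableAt.differentiableWithinAt
  · exact fun y hy => hf.deriv_re_nonneg hy

lemma im_pos {y₀ : ℝ} (hy₀ : y₀ ∈ Ioo (-1 : ℝ) 1) (h : deriv (fun a : ℝ => (f a).re) y₀ ≠ 0)
    {z : ℂ} (hz : 0 < z.im) : 0 < (f z).im := by
  have hA := (hf.differentiableOn.analyticOnNhd isOpen_C1).mono upper_union_strip_subset_C1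
  rcases hA.is_constant_or_isOpen isPreconnected_upper_union_strip with ⟨w, hw⟩ | hopen
  · refine absurd ?_ h
    have : (fun a : ℝ => (f a).re) =ᶠ[𝓝 y₀] fun _ => w.re := by
      filter_upwards [isOpen_Ioo.mem_nhds hy₀] with a ha
      rw [hw a (Or.inr (by simpa using ha))]
    rw [this.deriv_eq, deriv_const]
  · have himage : f '' {z | 0 < z.im} ⊆ interior {u : ℂ | 0 ≤ u.im} :=
      interior_maximal (by rintro _ ⟨u, hu, rfl⟩; exact hf.im_nonneg u hu)
        (hopen _ subset_union_left (isOpen_lt continuous_const continuous_im))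
    rw [interior_setOfPred_le_im] at himage
    exact himage (mem_image_of_mem f hz)

section Nonconstant

variable (hpos : ∀ z : ℂ, 0 < z.im → 0 < (f z).im)
include hpos

lemma im_neg {z : ℂ} (hz : z.im < 0) : (f z).im < 0 := by
  have := hpos (conj z) (by simpa using hz)
  rw [hf.conj_comm z (mem_C1_of_im_ne_zero hz.ne), conj_im] at this
  linarith

lemma julia {y : ℝ} (hy : y ∈ Ioo (-1 : ℝ) 1) {z : ℂ} (hz : 0 < z.im) :
    z.im * normSq (f z - f y) ≤
      normSq (z - y) * ((f z).im * deriv (fun a : ℝ => (f a).re) y) := by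
  simpa using julia_upperHalfPlane
    (hf.differentiableOn.mono fun _ hz => mem_C1_of_im_ne_zero (ne_of_gt hz)) hpos
    (hf.hasDerivAt_ofReal hy) (hf.im_ofReal hy) hz

lemma deriv_re_pos {y : ℝ} (hy : y ∈ Ioo (-1 : ℝ) 1) : 0 < deriv (fun a : ℝ => (f a).re) y := by
  refine (hf.deriv_re_nonneg hy).lt_of_ne fun h0 => ?_
  -- Julia's inequality at `z = I` with `f' y = 0` forces `f I = f y ∈ ℝ`.
  have hjulia := hf.julia hpos hy (z := I) (by simp)
  rw [← h0, mul_zero, mul_zero, I_im, one_mul] at hjulia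
  have hfI : f I = f y := sub_eq_zero.1 (normSq_eq_zero.1 (hjulia.antisymm (normSq_nonneg _)))
  have := hpos I (by simp)
  rw [hfI, hf.im_ofReal hy] at this
  exact this.false

lemma strictMonoOn : StrictMonoOn (fun a : ℝ => (f a).re) (Ioo (-1) 1) :=
  strictMonoOn_of_deriv_pos (convex_Ioo _ _)
    (fun _ hy => (hf.hasDerivAt_ofReal hy).real_of_complex.continuousAt.continuousWithinAt)
    (fun _ hy => hf.deriv_re_pos hpos (by rwa [interior_Ioo] at hy))

lemma apply_ne_apply_ofReal {y : ℝ} (hy : y ∈ Ioo (-1 : ℝ) 1) {z : ℂ} (hz : z ∈ C1)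
    (hzy : z ≠ y) : f z ≠ f y := by
  intro h
  rcases lt_trichotomy z.im 0 with him | him | him
  · have := hf.im_neg hpos him
    rw [h, hf.im_ofReal hy] at this
    exact this.false
  · have hre : z.re ∈ Ioo (-1 : ℝ) 1 := hz.resolve_left (not_not.2 him)
    have hz' : z = z.re := ext (by simp) (by simp [him])
    have hne : z.re ≠ y := fun h' => hzy (by rw [hz', h'])
    exact hne ((hf.strictMonoOn hpos).injOn hre hy (by simp only [← hz', h]))
  · have := hpos z him
    rw [h, hf.im_ofReal hy] at this
    exact this.false

lemma sq_sub_le_mul_deriv {a b : ℝ} (ha : a ∈ Ioo (-1 : ℝ) 1) (hb : b ∈ Ioo (-1 : ℝ) 1) :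
    ((f b).re - (f a).re) ^ 2 ≤
      (b - a) ^ 2 * (deriv (fun a : ℝ => (f a).re) a * deriv (fun a : ℝ => (f a).re) b) := by
  have hfb := hf.hasDerivAt_ofReal hb
  have hpath := (tendsto_ofReal_add_mul_I b).mono_right nhdsWithin_le_nhds
  have hlhs : Tendsto (fun ε : ℝ => normSq (f (b + ε * I) - f a)) (𝓝[>] 0)
      (𝓝 (normSq (f b - f a))) :=
    (continuous_normSq.tendsto _).comp ((hfb.continuousAt.tendsto.comp hpath).sub_const _)
  have hrhs : Tendsto (fun ε : ℝ => normSq (b + ε * I - a) *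
      ((f (b + ε * I)).im / ε * deriv (fun a : ℝ => (f a).re) a)) (𝓝[>] 0)
      (𝓝 (normSq (b - a) *
        (deriv (fun a : ℝ => (f a).re) b * deriv (fun a : ℝ => (f a).re) a))) := by
    refine ((continuous_normSq.tendsto _).comp (hpath.sub_const _)).mul (Tendsto.mul_const _ ?_)
    simpa using tendsto_im_div_of_hasDerivAt hfb (hf.im_ofReal hb)
  have hle := le_of_tendsto_of_tendsto hlhs hrhs <| by
    filter_upwards [self_mem_nhdsWithin] with ε (hε : 0 < ε)
    have := hf.julia hpos ha (z := b + ε * I) (by simpa using hε)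
    simp only [add_im, ofReal_im, mul_im, ofReal_re, I_im, I_re, mul_zero, mul_one, zero_add]
      at this
    rw [div_mul_eq_mul_div, mul_div_assoc', le_div_iff₀ hε]
    linarith
  simp only [normSq_apply, sub_re, sub_im, ofReal_re, ofReal_im, hf.im_ofReal ha,
    hf.im_ofReal hb] at hle
  nlinarith

section JuliaQuotient

variable {y : ℝ} (hy : y ∈ Ioo (-1 : ℝ) 1)
include hy

lemma juliaQuotient_ofReal {a : ℝ} (ha : a ∈ Ioo (-1 : ℝ) 1) (hay : a ≠ y) :
    juliaQuotient f y a =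
      ((1 / (a - y) - deriv (fun a : ℝ => (f a).re) y / ((f a).re - (f y).re) : ℝ) : ℂ) := by
  have hfa := hf.apply_ne_apply_ofReal hpos hy (ofReal_mem_C1 ha) (by exact_mod_cast hay)
  rw [juliaQuotient_of_ne (by exact_mod_cast hay) hfa, (hf.hasDerivAt_ofReal hy).deriv]
  have hreal : ∀ b ∈ Ioo (-1 : ℝ) 1, f b = ((f b).re : ℂ) := fun b hb =>
    ext rfl (by simp [hf.im_ofReal hb])
  rw [hreal a ha, hreal y hy]
  push_cast
  rfl

lemma differentiableOn_juliaQuotient : DifferentiableOn ℂ (juliaQuotient f y) C1 := by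
  have hyC := isOpen_C1.mem_nhds (ofReal_mem_C1 hy)
  have hg := (differentiableOn_dslope hyC).2 hf.differentiableOn
  refine ((differentiableOn_dslope hyC).2 hg).div hg fun z hz => ?_
  rcases eq_or_ne z y with rfl | hzy
  · rw [dslope_same, (hf.hasDerivAt_ofReal hy).deriv, ofReal_ne_zero]
    exact (hf.deriv_re_pos hpos hy).ne'
  · rw [dslope_of_ne _ hzy, slope_def_field]
    exact div_ne_zero (sub_ne_zero.2 (hf.apply_ne_apply_ofReal hpos hy hz hzy))
      (sub_ne_zero.2 hzy)

lemma isPickOnC1_juliaQuotient : IsPickOnC1 (juliaQuotient f y) where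
  differentiableOn := hf.differentiableOn_juliaQuotient hpos hy
  conj_comm z hz := by
    rcases eq_or_ne z y with rfl | hzy
    · refine (conj_ofReal _).symm ▸ (conj_eq_iff_im.2 (im_eq_zero_of_continuousAt ?_ ?_)).symm
      · exact ((hf.differentiableOn_juliaQuotient hpos hy).differentiableAt
          (isOpen_C1.mem_nhds (ofReal_mem_C1 hy))).continuousAt
      filter_upwards [nhdsWithin_le_nhds (isOpen_Ioo.mem_nhds hy), self_mem_nhdsWithin]
        with a ha hay
      rw [hf.juliaQuotient_ofReal hpos hy ha hay, ofReal_im]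
    have hcz : conj z ∈ C1 := hz.imp (by simp) (by simp)
    have hczy : conj z ≠ y := fun h => hzy (by rw [← conj_conj z, h, conj_ofReal])
    rw [juliaQuotient_of_ne hczy (hf.apply_ne_apply_ofReal hpos hy hcz hczy),
      juliaQuotient_of_ne hzy (hf.apply_ne_apply_ofReal hpos hy hz hzy), hf.conj_comm z hz,
      (hf.hasDerivAt_ofReal hy).deriv]
    simp only [map_sub, map_div₀, map_one, conj_ofReal, conj_eq_iff_im.2 (hf.im_ofReal hy)]
  im_nonneg z hz := by
    have hzy : z ≠ y := fun h => by simp [h] at hz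
    have hfz := hf.apply_ne_apply_ofReal hpos hy (mem_C1_of_im_ne_zero hz.ne') hzy
    have hjulia := hf.julia hpos hy hz
    rw [juliaQuotient_of_ne hzy hfz, (hf.hasDerivAt_ofReal hy).deriv]
    have hA := normSq_pos.2 (sub_ne_zero.2 hzy)
    have hB := normSq_pos.2 (sub_ne_zero.2 hfz)
    have hle : z.im / normSq (z - y) ≤
        deriv (fun a : ℝ => (f a).re) y * (f z).im / normSq (f z - f y) := by
      rw [div_le_div_iff₀ hA hB]
      linarith
    simp only [sub_im, div_im, one_re, one_im, ofReal_re, ofReal_im, hf.im_ofReal hy, zero_mul,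
      one_mul, zero_div, sub_zero, zero_sub]
    linarith

lemma inv_sub_sub_div_le {a b : ℝ} (ha : a ∈ Ioo (-1 : ℝ) 1) (hb : b ∈ Ioo (-1 : ℝ) 1)
    (hay : a ≠ y) (hby : b ≠ y) (hab : a ≤ b) :
    1 / (a - y) - deriv (fun a : ℝ => (f a).re) y / ((f a).re - (f y).re) ≤
      1 / (b - y) - deriv (fun a : ℝ => (f a).re) y / ((f b).re - (f y).re) := by
  have := (hf.isPickOnC1_juliaQuotient hpos hy).monotoneOn ha hb hab
  simpa only [hf.juliaQuotient_ofReal hpos hy ha hay, hf.juliaQuotient_ofReal hpos hy hb hby,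
    ofReal_re] using this

end JuliaQuotient

lemma sqrt_div_sub_one_div_le {a b x : ℝ} (ha : a ∈ Ioo (-1 : ℝ) 1)
    (hb : b ∈ Ioo (-1 : ℝ) 1) (hx : x ∈ Ioo (-1 : ℝ) 1) (hab : a < b) (hbx : b < x) :
    (√(deriv (fun a : ℝ => (f a).re) b / deriv (fun a : ℝ => (f a).re) a) - 1) / (b - a) ≤
      1 / (x - b) - deriv (fun a : ℝ => (f a).re) b / ((f x).re - (f b).re) := by
  set t := deriv (fun a : ℝ => (f a).re) a
  set s := deriv (fun a : ℝ => (f a).re) b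
  have ht : 0 < t := hf.deriv_re_pos hpos ha
  have hs : 0 < s := hf.deriv_re_pos hpos hb
  have hD : 0 < (f b).re - (f a).re := sub_pos.2 (hf.strictMonoOn hpos ha hb hab)
  have hL : 0 < b - a := sub_pos.2 hab
  have hsqrt : √(s / t) * ((f b).re - (f a).re) ≤ s * (b - a) := by
    rw [← pow_le_pow_iff_left₀ (by positivity) (by positivity) two_ne_zero, mul_pow,
      Real.sq_sqrt (by positivity)]
    calc s / t * ((f b).re - (f a).re) ^ 2 ≤ s / t * ((b - a) ^ 2 * (t * s)) := by
          gcongr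
          exact hf.sq_sub_le_mul_deriv hpos ha hb
      _ = (s * (b - a)) ^ 2 := by field_simp
  calc (√(s / t) - 1) / (b - a) ≤ s / ((f b).re - (f a).re) - 1 / (b - a) := by
        rw [sub_div, sub_le_sub_iff_right, div_le_div_iff₀ hL hD]
        linarith
    _ = 1 / (a - b) - s / ((f a).re - (f b).re) := by
        rw [← neg_sub b a, ← neg_sub (f b).re, div_neg, div_neg]
        ring
    _ ≤ _ := hf.inv_sub_sub_div_le hpos hb ha hx hab.ne hbx.ne' (hab.trans hbx).le

end Nonconstant

end IsPickOnC1

lemma four_mul_pow_three_div_sq_eq_iff {s t L X : ℝ} (ht : 0 < t) (hs : 0 < s) (hL : 0 < L)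
    (hX : 0 ≤ X) : 4 * s ^ 3 / (2 * s + X * L) ^ 2 = t ↔ X = 2 * s * (√(s / t) - 1) / L := by
  have hD : 0 < 2 * s + X * L := by positivity
  have hroot : (2 * s * √(s / t)) ^ 2 = 4 * s ^ 3 / t := by
    rw [mul_pow, Real.sq_sqrt (by positivity)]
    ring
  calc 4 * s ^ 3 / (2 * s + X * L) ^ 2 = t ↔ (2 * s + X * L) ^ 2 = 4 * s ^ 3 / t := by
        rw [div_eq_iff (by positivity), eq_div_iff ht.ne', eq_comm, mul_comm]
    _ ↔ 2 * s + X * L = 2 * s * √(s / t) := by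
        rw [← hroot, pow_left_inj₀ hD.le (by positivity) two_ne_zero]
    _ ↔ X = 2 * s * (√(s / t) - 1) / L := by
        rw [eq_div_iff hL.ne']
        constructor <;> intro h <;> linarith

lemma four_mul_pow_three_div_mul_sub_le {s X r v : ℝ} (hs : 0 < s) (hX : 0 < X) (hr : 0 < r)
    (hv : 0 < v) (hD : 0 < 2 * s - X * r) (h : X / (2 * s) ≤ 1 / r - s / v) :
    4 * s ^ 3 / X * (1 / (2 * s - X * r) - 1 / (2 * s)) ≤ v := by
  have hsv : s / v ≤ (2 * s - X * r) / (2 * s * r) := by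
    have : 1 / r - X / (2 * s) = (2 * s - X * r) / (2 * s * r) := by field_simp
    linarith
  have hlhs : 4 * s ^ 3 / X * (1 / (2 * s - X * r) - 1 / (2 * s)) =
      2 * s ^ 2 * r / (2 * s - X * r) := by
    rw [one_div, one_div, inv_sub_inv hD.ne' (by positivity), sub_sub_cancel]
    field_simp
    norm_num
  rw [hlhs, div_le_iff₀ hD]
  rw [div_le_div_iff₀ hv (by positivity)] at hsv
  nlinarith

theorem stmt13_general (c₁ c₂ c₃ c₄ : ℝ)
    (h1 : -1 < c₁) (h12 : c₁ < c₂) (h2 : c₂ < 1)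
    (f : ℂ → ℂ) (hf : MemA1 c₁ c₂ c₃ c₄ f)
    (t s X : ℝ)
    (ht : t = deriv (fun y : ℝ => (f y).re) c₁)
    (hs : s = deriv (fun y : ℝ => (f y).re) c₂)
    (htpos : 0 < t) (hts : t < s)
    (hX : X = 2 * s * (Real.sqrt (s / t) - 1) / (c₂ - c₁)) :
    0 < X ∧
    4 * s ^ 3 / (2 * s + X * (c₂ - c₁)) ^ 2 = t ∧
    (∀ X' : ℝ, 0 < X' →
      4 * s ^ 3 / (2 * s + X' * (c₂ - c₁)) ^ 2 = t → X' = X) ∧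
    ∀ x ∈ Set.Ioo c₂ (1 : ℝ), 0 < 2 * s + X * (c₂ - x) →
      c₄ + (4 * s ^ 3 / X) * (1 / (2 * s + X * (c₂ - x)) - 1 / (2 * s)) ≤ (f x).re := by
  have hs₀ : 0 < s := htpos.trans hts
  have hL : 0 < c₂ - c₁ := sub_pos.2 h12
  have hXpos : 0 < X := by
    have : 1 < √(s / t) := Real.lt_sqrt zero_le_one |>.2 (by rwa [one_pow, one_lt_div htpos])
    rw [hX]
    exact div_pos (mul_pos (by positivity) (sub_pos.2 this)) hL
  refine ⟨hXpos, (four_mul_pow_three_div_sq_eq_iff htpos hs₀ hL hXpos.le).2 hX,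
    fun X' hX' h => ((four_mul_pow_three_div_sq_eq_iff htpos hs₀ hL hX'.le).1 h).trans hX.symm, ?_⟩
  rintro x ⟨hc₂x, hx₁⟩ hD
  have hc₁ : c₁ ∈ Ioo (-1 : ℝ) 1 := ⟨h1, h12.trans h2⟩
  have hc₂ : c₂ ∈ Ioo (-1 : ℝ) 1 := ⟨h1.trans h12, h2⟩
  have hx : x ∈ Ioo (-1 : ℝ) 1 := ⟨hc₂.1.trans hc₂x, hx₁⟩
  have hP := hf.isPickOnC1
  have hpos := fun (z : ℂ) (hz : 0 < z.im) => hP.im_pos hc₁ (ht ▸ htpos.ne') hz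
  have hbound := hP.sqrt_div_sub_one_div_le hpos hc₁ hc₂ hx h12 hc₂x
  have hu : c₄ < (f x).re := by simpa [hf.val2] using hP.strictMonoOn hpos hc₂ hx hc₂x
  rw [← ht, ← hs, hf.val2, ofReal_re] at hbound
  have hXdiv : X / (2 * s) = (√(s / t) - 1) / (c₂ - c₁) := by
    rw [hX]
    field_simp
  have := four_mul_pow_three_div_mul_sub_le hs₀ hXpos (sub_pos.2 hc₂x) (sub_pos.2 hu)
    (by linarith) (hXdiv ▸ hbound)
  rw [show 2 * s - X * (x - c₂) = 2 * s + X * (c₂ - x) by ring] at this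
  linarith

theorem stmt13 (c₁ c₂ c₃ c₄ : ℝ)
    (h1 : -1 < c₁) (h12 : c₁ < c₂) (h2 : c₂ < 1)
    (h3 : -1 < c₃) (h34 : c₃ < c₄) (h4 : c₄ < 1)
    (f : ℂ → ℂ) (hf : MemA1 c₁ c₂ c₃ c₄ f)
    (t s X : ℝ)
    (ht : t = deriv (fun y : ℝ => (f y).re) c₁)
    (hs : s = deriv (fun y : ℝ => (f y).re) c₂)
    (htpos : 0 < t) (hts : t < s)
    (hX : X = 2 * s * (Real.sqrt (s / t) - 1) / (c₂ - c₁)) :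
    0 < X ∧
    4 * s ^ 3 / (2 * s + X * (c₂ - c₁)) ^ 2 = t ∧
    (∀ X' : ℝ, 0 < X' →
      4 * s ^ 3 / (2 * s + X' * (c₂ - c₁)) ^ 2 = t → X' = X) ∧
    ∀ x ∈ Set.Ioo c₂ (1 : ℝ), 0 < 2 * s + X * (c₂ - x) →
      c₄ + (4 * s ^ 3 / X) * (1 / (2 * s + X * (c₂ - x)) - 1 / (2 * s)) ≤ (f x).re :=
  stmt13_general c₁ c₂ c₃ c₄ h1 h12 h2 f hf t s X ht hs htpos hts hX
end
end

section
/- Let λ ∈ (−1,0), β = √(1−λ), α = 1/(2β), and T(x) = −α·(x+β). Let u be a real-valued function defined and differentiable on an interval (−r, 0] with r > 0, with u(0) = 1, s := u′(0) > 0, and u(x) ≤ 1 for all x ∈ (−r, 0]. Define V(0) = 0 and, for real z ≠ 0 small enough that T(−√(1 − λ(1−z²))) ∈ (−r, 0], V(z) = −sign(z)·√(1 − u(T(−√(1 − λ(1−z²))))). Then V is differentiable at 0 and V′(0) = −α·√(s·|λ|) = −√(−λ·s)/(2·√(1−λ)); in particular V′(0) ≠ 0. -/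
/-!
Writing `q z = 1 - λ (1 - z²)`, rationalising gives `T (-√(q z)) = α (√(q z) - β) = h z · z²`
with `h z = α λ / (√(q z) + β)` and `h 0 = λ α² < 0`. So the argument of `u` tends to `0` from
the left like `λ α² z²`, and the one-sided derivative of `u` gives
`(1 - u (T (-√(q z)))) / z² → -s λ α² = s |λ| α²`. Finally, since `sign z / z = 1 / |z|`,
the difference quotient `V z / z` is `-√((1 - u (T (-√(q z)))) / z²)`.
-/

open Set Filter Topology

noncomputable section

lemma slope_neg_sign_mul_sqrt (F : ℝ → ℝ) {z : ℝ} (hz : z ≠ 0) :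
    slope (fun x => -Real.sign x * √(F x)) 0 z = -√(F z / z ^ 2) := by
  rw [slope_def_field, Real.sqrt_div' _ (sq_nonneg z), Real.sqrt_sq_eq_abs, Real.sign_zero]
  rcases hz.lt_or_gt with hneg | hpos
  · rw [Real.sign_of_neg hneg, abs_of_neg hneg]
    field_simp
    ring
  · rw [Real.sign_of_pos hpos, abs_of_pos hpos]
    field_simp
    ring

lemma hasDerivAt_neg_sign_mul_sqrt {F : ℝ → ℝ} {L : ℝ}
    (hF : Tendsto (fun z => F z / z ^ 2) (𝓝[≠] 0) (𝓝 L)) :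
    HasDerivAt (fun x => -Real.sign x * √(F x)) (-√L) 0 := by
  rw [hasDerivAt_iff_tendsto_slope]
  refine (Real.continuous_sqrt.continuousAt.tendsto.comp hF).neg.congr' ?_
  filter_upwards [self_mem_nhdsWithin] with z hz
  exact (slope_neg_sign_mul_sqrt F hz).symm

lemma tendsto_sub_comp_div_sq_of_hasDerivWithinAt_Iio {u g h : ℝ → ℝ} {s : ℝ}
    (hu : HasDerivWithinAt u s (Iio 0) 0) (hg : ∀ᶠ z in 𝓝 0, g z = h z * z ^ 2)
    (hh : ContinuousAt h 0) (hh0 : h 0 < 0) :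
    Tendsto (fun z => (u (g z) - u 0) / z ^ 2) (𝓝[≠] 0) (𝓝 (s * h 0)) := by
  have hneg : ∀ᶠ z in 𝓝 0, h z < 0 := hh.eventually (gt_mem_nhds hh0)
  have hg' : ∀ᶠ z in 𝓝[≠] 0, g z = h z * z ^ 2 ∧ h z < 0 ∧ z ≠ 0 := by
    filter_upwards [nhdsWithin_le_nhds (hg.and hneg), self_mem_nhdsWithin] with z hz hz0
    exact ⟨hz.1, hz.2, hz0⟩
  have hg_lim : Tendsto g (𝓝[≠] 0) (𝓝[<] 0) := by
    refine tendsto_nhdsWithin_iff.mpr ⟨?_, ?_⟩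
    · have : Tendsto (fun z => h z * z ^ 2) (𝓝 0) (𝓝 (h 0 * 0 ^ 2)) :=
        hh.tendsto.mul ((continuous_pow 2).tendsto 0)
      rw [zero_pow two_ne_zero, mul_zero] at this
      exact (this.congr' (hg.mono fun _ hz => hz.symm)).mono_left nhdsWithin_le_nhds
    · filter_upwards [hg'] with z ⟨hgz, hhz, _⟩
      rw [hgz]
      exact mul_neg_of_neg_of_pos hhz (by positivity)
  have hslope := ((hasDerivWithinAt_iff_tendsto_slope' self_notMem_Iio).mp hu).comp hg_lim
  refine (hslope.mul (hh.tendsto.mono_left nhdsWithin_le_nhds)).congr' ?_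
  filter_upwards [hg'] with z ⟨hgz, hhz, hz⟩
  have := hhz.ne
  simp only [Function.comp, slope_def_field, sub_zero, hgz]
  field_simp

lemma neg_mul_neg_sqrt_add {α β q : ℝ} (hβ : 0 < β) (hq : 0 ≤ q) :
    -α * (-√q + β) = α * (q - β ^ 2) / (√q + β) := by
  rw [eq_div_iff (by positivity)]
  linear_combination α * Real.sq_sqrt hq

lemma eventually_neg_mul_neg_sqrt_add_eq_mul_sq {lam α β : ℝ} (hlam : lam < 0)
    (hβ : β = √(1 - lam)) :
    ∀ᶠ z in 𝓝 0, -α * (-√(1 - lam * (1 - z ^ 2)) + β)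
      = α * lam / (√(1 - lam * (1 - z ^ 2)) + β) * z ^ 2 := by
  have hq : ContinuousAt (fun z : ℝ => 1 - lam * (1 - z ^ 2)) 0 := by fun_prop
  have hq0 : (0 : ℝ) < 1 - lam * (1 - 0 ^ 2) := by simp; linarith
  filter_upwards [hq.eventually (lt_mem_nhds hq0)] with z hz
  rw [neg_mul_neg_sqrt_add (hβ ▸ Real.sqrt_pos.mpr (by linarith)) hz.le, hβ,
    Real.sq_sqrt (by linarith)]
  ring

theorem stmt16_general (lam : ℝ) (hlam : lam ∈ Set.Ioo (-1 : ℝ) 0)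
    (r : ℝ) (hr : 0 < r)
    (u : ℝ → ℝ)
    (hu0 : u 0 = 1)
    (β α s : ℝ) (T V : ℝ → ℝ)
    (hβ : β = Real.sqrt (1 - lam))
    (hα : α = 1 / (2 * β))
    (hT : ∀ x : ℝ, T x = -α * (x + β))
    (hs : s = derivWithin u (Set.Ioc (-r) 0) 0)
    (hspos : 0 < s)
    (hV : ∀ z : ℝ,
      V z = -Real.sign z *
        Real.sqrt (1 - u (T (-Real.sqrt (1 - lam * (1 - z ^ 2)))))) :
    HasDerivAt V (-α * Real.sqrt (s * |lam|)) 0 ∧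
    -α * Real.sqrt (s * |lam|) = -Real.sqrt (-lam * s) / (2 * Real.sqrt (1 - lam)) ∧
    -α * Real.sqrt (s * |lam|) ≠ 0 := by
  obtain ⟨-, hlam0⟩ := hlam
  have hβpos : 0 < β := hβ ▸ Real.sqrt_pos.mpr (by linarith)
  have hαpos : 0 < α := by rw [hα]; positivity
  -- `derivWithin` is `0` where `u` is not differentiable, so `s ≠ 0` already yields the derivative.
  have hu : HasDerivWithinAt u s (Iio 0) 0 := by
    rw [hs]
    exact (differentiableWithinAt_of_derivWithin_ne_zero (hs ▸ hspos.ne')).hasDerivWithinAt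
      |>.mono_of_mem_nhdsWithin
        (mem_of_superset (Ioo_mem_nhdsLT (neg_lt_zero.mpr hr)) Ioo_subset_Ioc_self)
  set q : ℝ → ℝ := fun z => 1 - lam * (1 - z ^ 2)
  set h : ℝ → ℝ := fun z => α * lam / (√(q z) + β)
  have hh0 : h 0 = lam * α ^ 2 := by
    have hq0 : √(q 0) = β := by simp [q, hβ]
    simp only [h, hq0, hα]
    field_simp
    ring
  have hTq : ∀ᶠ z in 𝓝 0, T (-√(q z)) = h z * z ^ 2 := by
    simpa only [hT] using eventually_neg_mul_neg_sqrt_add_eq_mul_sq (α := α) hlam0 hβ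
  have hlim : Tendsto (fun z => (1 - u (T (-√(q z)))) / z ^ 2) (𝓝[≠] 0)
      (𝓝 ((α * √(s * |lam|)) ^ 2)) := by
    have hh : ContinuousAt h 0 := by fun_prop (disch := positivity)
    have := (tendsto_sub_comp_div_sq_of_hasDerivWithinAt_Iio hu hTq hh
      (hh0 ▸ mul_neg_of_neg_of_pos hlam0 (by positivity))).neg
    rw [hh0, hu0] at this
    convert this using 2 with z
    · ring
    · rw [mul_pow, Real.sq_sqrt (by positivity), abs_of_neg hlam0]
      ring
  have hderiv : HasDerivAt V (-α * √(s * |lam|)) 0 := by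
    rw [funext hV, neg_mul, ← Real.sqrt_sq (by positivity : 0 ≤ α * √(s * |lam|))]
    exact hasDerivAt_neg_sign_mul_sqrt hlim
  refine ⟨hderiv, ?_, ?_⟩
  · rw [abs_of_neg hlam0, hα, hβ, mul_comm s (-lam)]
    field_simp
  · exact mul_ne_zero (neg_ne_zero.mpr hαpos.ne')
      (Real.sqrt_ne_zero'.mpr (mul_pos hspos (abs_pos.mpr hlam0.ne)))

theorem stmt16 (lam : ℝ) (hlam : lam ∈ Set.Ioo (-1 : ℝ) 0)
    (r : ℝ) (hr : 0 < r)
    (u : ℝ → ℝ)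
    (hu : DifferentiableOn ℝ u (Set.Ioc (-r) 0))
    (hu0 : u 0 = 1)
    (β α s : ℝ) (T V : ℝ → ℝ)
    (hβ : β = Real.sqrt (1 - lam))
    (hα : α = 1 / (2 * β))
    (hT : ∀ x : ℝ, T x = -α * (x + β))
    (hs : s = derivWithin u (Set.Ioc (-r) 0) 0)
    (hspos : 0 < s)
    (hub : ∀ x ∈ Set.Ioc (-r) 0, u x ≤ 1)
    (hV : ∀ z : ℝ,
      V z = -Real.sign z *
        Real.sqrt (1 - u (T (-Real.sqrt (1 - lam * (1 - z ^ 2)))))) :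
    HasDerivAt V (-α * Real.sqrt (s * |lam|)) 0 ∧
    -α * Real.sqrt (s * |lam|) = -Real.sqrt (-lam * s) / (2 * Real.sqrt (1 - lam)) ∧
    -α * Real.sqrt (s * |lam|) ≠ 0 :=
  stmt16_general lam hlam r hr u hu0 β α s T V hβ hα hT hs hspos hV
end
end
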